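/- arXiv:1808.05274 — 2 statements merged into one kernel-verified Lean document; each statement's English description precedes it below -/
import Mathlib

section
/- Let f₁, …, f_n : ℝ^m → ℝ be convex and differentiable with L-Lipschitz gradients, set f = (1/n) Σᵢ fᵢ, let Ω ⊆ ℝ^m be convex, and let x* ∈ Ω minimize f over Ω (so ⟨∇f(x*), x − x*⟩ ≥ 0 for all x ∈ Ω). Then for all x, x₀ ∈ Ω, the average (1/n) Σᵢ ‖∇fᵢ(x) − ∇fᵢ(x₀) + ∇f(x₀) − ∇f(x)‖² ≤ 6L ( 2(f(x) − f(x*)) + (f(x₀) − f(x*)) ). -/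
/-!
Write `D_f(x, y) = f x - f y - ⟪∇f y, x - y⟫` for the Bregman divergence. A convex function with
`L`-Lipschitz gradient is co-coercive, `‖∇f x - ∇f y‖² ≤ 2L D_f(x, y)`: compare `D_f(z, y) ≥ 0`
with the three-point identity and the descent bound `D_f(z, x) ≤ L/2 ‖z - x‖²` at the gradient
step `z = x - (∇f x - ∇f y) / L`.

The estimator minus its mean is `aᵢ - mean a` with `aᵢ = ∇fᵢ x - ∇fᵢ x₀`; a variance is at most the
second moment, and `‖aᵢ‖² ≤ 2‖∇fᵢ x - ∇fᵢ x*‖² + 2‖∇fᵢ x₀ - ∇fᵢ x*‖²`, so by co-coercivity the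
average is at most `4L (D_f(x, x*) + D_f(x₀, x*))`. Finally `0 ≤ D_f(y, x*) ≤ f y - f x*` on `Ω`
by convexity and the optimality of `x*`.
-/

open scoped InnerProductSpace NNReal
open Set Finset

section Variance

variable {ι E : Type*} [NormedAddCommGroup E] [InnerProductSpace ℝ E]

theorem sum_norm_sub_mean_sq_le (s : Finset ι) (b : ι → E) :
    ∑ i ∈ s, ‖b i - (#s : ℝ)⁻¹ • ∑ j ∈ s, b j‖ ^ 2 ≤ ∑ i ∈ s, ‖b i‖ ^ 2 := by
  rcases s.eq_empty_or_nonempty with rfl | hs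
  · simp
  set μ := (#s : ℝ)⁻¹ • ∑ j ∈ s, b j
  have hsum : ∑ j ∈ s, b j = (#s : ℝ) • μ := by
    rw [smul_inv_smul₀ (by exact_mod_cast hs.card_pos.ne')]
  have expand : ∑ i ∈ s, ‖b i - μ‖ ^ 2 = ∑ i ∈ s, ‖b i‖ ^ 2 - (#s : ℝ) * ‖μ‖ ^ 2 := by
    simp only [norm_sub_sq_real]
    rw [sum_add_distrib, sum_sub_distrib, ← mul_sum, ← sum_inner, hsum, real_inner_smul_left,
      real_inner_self_eq_norm_sq, sum_const, nsmul_eq_mul]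
    ring
  rw [expand]
  linarith [mul_nonneg (Nat.cast_nonneg (α := ℝ) #s) (sq_nonneg ‖μ‖)]

theorem sum_norm_sub_sub_mean_sq_le (s : Finset ι) (u v w : ι → E) :
    ∑ i ∈ s, ‖u i - v i - (#s : ℝ)⁻¹ • ∑ j ∈ s, (u j - v j)‖ ^ 2 ≤
      2 * ∑ i ∈ s, ‖u i - w i‖ ^ 2 + 2 * ∑ i ∈ s, ‖v i - w i‖ ^ 2 := by
  refine (sum_norm_sub_mean_sq_le s (u - v)).trans ?_
  rw [mul_sum, mul_sum, ← sum_add_distrib]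
  refine sum_le_sum fun i _ => ?_
  have h := parallelogram_law_with_norm ℝ (u i - w i) (v i - w i)
  rw [sub_sub_sub_cancel_right] at h
  simp only [Pi.sub_apply]
  nlinarith [sq_nonneg ‖u i - w i + (v i - w i)‖]

end Variance

section Bregman

variable {E : Type*} [NormedAddCommGroup E] [InnerProductSpace ℝ E] [CompleteSpace E]

noncomputable def bregmanDiv (f : E → ℝ) (x y : E) : ℝ := f x - f y - ⟪gradient f y, x - y⟫_ℝ

theorem bregmanDiv_add_bregmanDiv_add_inner (f : E → ℝ) (x y z : E) :
    bregmanDiv f z x + bregmanDiv f x y + ⟪gradient f x - gradient f y, z - x⟫_ℝ =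
      bregmanDiv f z y := by
  simp only [bregmanDiv, inner_sub_left, inner_sub_right]
  ring

theorem hasDerivAt_comp_lineMap {f : E → ℝ} {x y : E} {t : ℝ}
    (hf : DifferentiableAt ℝ f (AffineMap.lineMap y x t)) :
    HasDerivAt (fun s : ℝ => f (AffineMap.lineMap y x s))
      ⟪gradient f (AffineMap.lineMap y x t), x - y⟫_ℝ t := by
  rw [inner_gradient_left]
  exact hf.hasFDerivAt.comp_hasDerivAt t AffineMap.hasDerivAt_lineMap

theorem ConvexOn.bregmanDiv_nonneg {f : E → ℝ} (hconv : ConvexOn ℝ univ f) {y : E}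
    (hf : DifferentiableAt ℝ f y) (x : E) : 0 ≤ bregmanDiv f x y := by
  have hline : ConvexOn ℝ univ (fun s : ℝ => f (AffineMap.lineMap y x s)) := by
    have h := hconv.comp_affineMap (AffineMap.lineMap (k := ℝ) y x)
    rw [preimage_univ] at h
    exact h
  have hd := hasDerivAt_comp_lineMap (x := x) (t := 0) (by simpa using hf)
  have := hline.le_slope_of_hasDerivAt (mem_univ 0) (mem_univ 1) zero_lt_one hd
  simp only [AffineMap.lineMap_apply_zero, AffineMap.lineMap_apply_one, slope_def_field] at this
  rw [bregmanDiv]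
  linarith

theorem bregmanDiv_le_of_lipschitzWith {f : E → ℝ} {K : ℝ≥0} (hf : Differentiable ℝ f)
    (hlip : LipschitzWith K (gradient f)) (x y : E) :
    bregmanDiv f x y ≤ K / 2 * ‖x - y‖ ^ 2 := by
  set γ := AffineMap.lineMap (k := ℝ) y x
  set ψ : ℝ → ℝ := fun t => f (γ t) - t * ⟪gradient f y, x - y⟫_ℝ - K / 2 * t ^ 2 * ‖x - y‖ ^ 2
  have hψ : ∀ t, HasDerivAt ψ
      (⟪gradient f (γ t) - gradient f y, x - y⟫_ℝ - K * t * ‖x - y‖ ^ 2) t := by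
    intro t
    refine (((hasDerivAt_comp_lineMap (hf _)).sub ((hasDerivAt_id t).mul_const
      ⟪gradient f y, x - y⟫_ℝ)).sub (((hasDerivAt_pow 2 t).const_mul (K / 2 : ℝ)).mul_const
        (‖x - y‖ ^ 2))).congr_deriv ?_
    simp only [inner_sub_left]
    push_cast
    ring
  have hψ_anti : AntitoneOn ψ (Icc 0 1) := by
    refine antitoneOn_of_hasDerivWithinAt_nonpos (convex_Icc 0 1)
      (fun t _ => (hψ t).continuousAt.continuousWithinAt)
      (fun t _ => (hψ t).hasDerivWithinAt) fun t ht => ?_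
    rw [interior_Icc] at ht
    have hγ : γ t - y = t • (x - y) := AffineMap.lineMap_vsub_left y x t
    have hinner : ⟪gradient f (γ t) - gradient f y, x - y⟫_ℝ ≤ K * t * ‖x - y‖ ^ 2 :=
      calc ⟪gradient f (γ t) - gradient f y, x - y⟫_ℝ
        ≤ ‖gradient f (γ t) - gradient f y‖ * ‖x - y‖ := real_inner_le_norm _ _
      _ ≤ K * ‖γ t - y‖ * ‖x - y‖ := by gcongr; exact hlip.norm_sub_le _ _
      _ = K * t * ‖x - y‖ ^ 2 := by
        rw [hγ, norm_smul, Real.norm_of_nonneg ht.1.le]; ring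
    linarith
  have := hψ_anti (left_mem_Icc.2 zero_le_one) (right_mem_Icc.2 zero_le_one) zero_le_one
  simp only [ψ, γ, AffineMap.lineMap_apply_zero, AffineMap.lineMap_apply_one] at this
  rw [bregmanDiv]
  linarith

theorem ConvexOn.sq_norm_sub_gradient_le_bregmanDiv {f : E → ℝ} {K : ℝ≥0}
    (hconv : ConvexOn ℝ univ f) (hf : Differentiable ℝ f) (hlip : LipschitzWith K (gradient f))
    (x y : E) : ‖gradient f x - gradient f y‖ ^ 2 ≤ 2 * K * bregmanDiv f x y := by
  set g := gradient f x - gradient f y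
  rcases eq_zero_or_pos K with rfl | hK
  · have hg : ‖g‖ ≤ 0 := by simpa using hlip.norm_sub_le x y
    simp [norm_le_zero_iff.1 hg]
  have hK' : (0 : ℝ) < K := hK
  set z := x - (K : ℝ)⁻¹ • g
  have hzx : z - x = -((K : ℝ)⁻¹ • g) := by simp [z]
  have hthree := bregmanDiv_add_bregmanDiv_add_inner f x y z
  have hnonneg := hconv.bregmanDiv_nonneg (hf y) z
  have hsmooth := bregmanDiv_le_of_lipschitzWith hf hlip z x
  rw [hzx, inner_neg_right, real_inner_smul_right, real_inner_self_eq_norm_sq] at hthree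
  rw [hzx, norm_neg, norm_smul, Real.norm_of_nonneg (inv_nonneg.2 hK'.le), mul_pow] at hsmooth
  have key : ‖g‖ ^ 2 / (2 * K) ≤ bregmanDiv f x y := by
    have : (K : ℝ) / 2 * ((K : ℝ)⁻¹ ^ 2 * ‖g‖ ^ 2) = (K : ℝ)⁻¹ * ‖g‖ ^ 2 - ‖g‖ ^ 2 / (2 * K) := by
      field_simp
      ring
    linarith
  rwa [div_le_iff₀ (by positivity), mul_comm] at key

section Sum

variable {ι : Type*} (s : Finset ι) {f : ι → E → ℝ}

theorem gradient_const_mul_sum (c : ℝ) {x : E} (hf : ∀ i ∈ s, DifferentiableAt ℝ (f i) x) :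
    gradient (fun y => c * ∑ i ∈ s, f i y) x = c • ∑ i ∈ s, gradient (f i) x := by
  have hF : HasFDerivAt (fun y => c * ∑ i ∈ s, f i y) (c • ∑ i ∈ s, fderiv ℝ (f i) x) x :=
    (HasFDerivAt.fun_sum fun i hi => (hf i hi).hasFDerivAt).const_mul c
  rw [gradient, hF.fderiv, map_smul, map_sum]
  rfl

theorem bregmanDiv_const_mul_sum (c : ℝ) {y : E} (hf : ∀ i ∈ s, DifferentiableAt ℝ (f i) y) (x : E) :
    bregmanDiv (fun z => c * ∑ i ∈ s, f i z) x y = c * ∑ i ∈ s, bregmanDiv (f i) x y := by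
  simp only [bregmanDiv, gradient_const_mul_sum s c hf, real_inner_smul_left, sum_inner,
    sum_sub_distrib]
  ring

theorem sum_sq_norm_sub_gradient_le_bregmanDiv {K : ℝ≥0} {c : ℝ} (hc : 0 ≤ c)
    (hconv : ∀ i ∈ s, ConvexOn ℝ univ (f i)) (hf : ∀ i ∈ s, Differentiable ℝ (f i))
    (hlip : ∀ i ∈ s, LipschitzWith K (gradient (f i))) (x y : E) :
    c * ∑ i ∈ s, ‖gradient (f i) x - gradient (f i) y‖ ^ 2 ≤
      2 * K * bregmanDiv (fun z => c * ∑ i ∈ s, f i z) x y := by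
  rw [bregmanDiv_const_mul_sum s c (fun i hi => hf i hi y), mul_left_comm]
  gcongr c * ?_
  rw [mul_sum]
  gcongr with i hi
  exact (hconv i hi).sq_norm_sub_gradient_le_bregmanDiv (hf i hi) (hlip i hi) x y

end Sum

end Bregman

theorem nonneg_of_norm_sub_le_mul {α β : Type*} [SeminormedAddCommGroup α] [NormedAddCommGroup β]
    [Nontrivial β] {g : β → α} {L : ℝ} (h : ∀ x y, ‖g x - g y‖ ≤ L * ‖x - y‖) : 0 ≤ L := by
  obtain ⟨x, y, hxy⟩ := exists_pair_ne β
  have hpos : 0 < ‖x - y‖ := norm_pos_iff.2 (sub_ne_zero.2 hxy)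
  exact nonneg_of_mul_nonneg_left ((norm_nonneg _).trans (h x y)) hpos

theorem variance_reduced_gradient_bound_general {m n : ℕ}
    (f : Fin n → EuclideanSpace ℝ (Fin m) → ℝ) (L : ℝ)
    (hconv : ∀ i, ConvexOn ℝ Set.univ (f i))
    (hdiff : ∀ i, Differentiable ℝ (f i))
    (hlip : ∀ i x y, ‖gradient (f i) x - gradient (f i) y‖ ≤ L * ‖x - y‖)
    (F : EuclideanSpace ℝ (Fin m) → ℝ)
    (hF : F = fun x => (1 / (n : ℝ)) * ∑ i, f i x)
    (Ω : Set (EuclideanSpace ℝ (Fin m)))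
    (xstar : EuclideanSpace ℝ (Fin m))
    (hfoc : ∀ x ∈ Ω, 0 ≤ ⟪gradient F xstar, x - xstar⟫_ℝ) :
    ∀ x ∈ Ω, ∀ x₀ ∈ Ω,
      (1 / (n : ℝ)) *
          ∑ i, ‖gradient (f i) x - gradient (f i) x₀ + gradient F x₀ - gradient F x‖ ^ 2 ≤
        6 * L * (2 * (F x - F xstar) + (F x₀ - F xstar)) := by
  intro x hx x₀ hx₀
  rcases subsingleton_or_nontrivial (EuclideanSpace ℝ (Fin m)) with hE | hE
  · simp [Subsingleton.elim x xstar, Subsingleton.elim x₀ xstar]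
  rcases isEmpty_or_nonempty (Fin n) with hn | hn
  · simp [hF]
  obtain ⟨i₀⟩ := hn
  lift L to ℝ≥0 using nonneg_of_norm_sub_le_mul (hlip i₀)
  subst hF
  set F := fun x => (1 / (n : ℝ)) * ∑ i, f i x
  have hcoco := sum_sq_norm_sub_gradient_le_bregmanDiv univ (one_div_nonneg.2 n.cast_nonneg)
    (fun i _ => hconv i) (fun i _ => hdiff i)
    (fun i _ => lipschitzWith_iff_norm_sub_le.2 (hlip i))
  have hD : ∀ y ∈ Ω, 0 ≤ bregmanDiv F y xstar ∧ bregmanDiv F y xstar ≤ F y - F xstar := by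
    intro y hy
    refine ⟨?_, by rw [bregmanDiv]; linarith [hfoc y hy]⟩
    rw [bregmanDiv_const_mul_sum univ _ (fun i _ => hdiff i xstar)]
    exact mul_nonneg (by positivity) <|
      sum_nonneg fun i _ => (hconv i).bregmanDiv_nonneg (hdiff i xstar) y
  have hterm : ∀ i, gradient (f i) x - gradient (f i) x₀ + gradient F x₀ - gradient F x =
      gradient (f i) x - gradient (f i) x₀ -
        (#(univ : Finset (Fin n)) : ℝ)⁻¹ • ∑ j, (gradient (f j) x - gradient (f j) x₀) := by
    intro i
    rw [gradient_const_mul_sum univ _ (fun j _ => hdiff j x),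
      gradient_const_mul_sum univ _ (fun j _ => hdiff j x₀), card_univ, Fintype.card_fin,
      sum_sub_distrib, smul_sub, one_div]
    abel
  obtain ⟨hDx, hDxF⟩ := hD x hx
  obtain ⟨hDx₀, hDx₀F⟩ := hD x₀ hx₀
  calc (1 / (n : ℝ)) *
        ∑ i, ‖gradient (f i) x - gradient (f i) x₀ + gradient F x₀ - gradient F x‖ ^ 2
      ≤ (1 / (n : ℝ)) * (2 * ∑ i, ‖gradient (f i) x - gradient (f i) xstar‖ ^ 2 +
          2 * ∑ i, ‖gradient (f i) x₀ - gradient (f i) xstar‖ ^ 2) := by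
        simp only [hterm]
        gcongr
        exact sum_norm_sub_sub_mean_sq_le _ _ _ _
    _ ≤ 2 * (2 * L * bregmanDiv F x xstar) + 2 * (2 * L * bregmanDiv F x₀ xstar) := by
        linarith [hcoco x xstar, hcoco x₀ xstar]
    _ ≤ 6 * L * (2 * (F x - F xstar) + (F x₀ - F xstar)) := by
        have hL : (0 : ℝ) ≤ L := L.2
        nlinarith [mul_le_mul_of_nonneg_left hDxF hL, mul_le_mul_of_nonneg_left hDx₀F hL,
          mul_nonneg hL hDx, mul_nonneg hL hDx₀]

/-- Variance bound for the variance-reduced stochastic gradient (Lemma 1 of the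
paper, written as a deterministic average): for `F = (1/n) Σᵢ fᵢ` and a minimizer
`x*` of `F` over a convex set `Ω`,
`(1/n) Σᵢ ‖∇fᵢ(x) − ∇fᵢ(x₀) + ∇F(x₀) − ∇F(x)‖² ≤ 6L (2(F x − F x*) + (F x₀ − F x*))`. -/
theorem variance_reduced_gradient_bound {m n : ℕ}
    (f : Fin n → EuclideanSpace ℝ (Fin m) → ℝ) (L : ℝ)
    (hconv : ∀ i, ConvexOn ℝ Set.univ (f i))
    (hdiff : ∀ i, Differentiable ℝ (f i))
    (hlip : ∀ i x y, ‖gradient (f i) x - gradient (f i) y‖ ≤ L * ‖x - y‖)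
    (F : EuclideanSpace ℝ (Fin m) → ℝ)
    (hF : F = fun x => (1 / (n : ℝ)) * ∑ i, f i x)
    (Ω : Set (EuclideanSpace ℝ (Fin m))) (hΩconv : Convex ℝ Ω)
    (xstar : EuclideanSpace ℝ (Fin m)) (hxstarΩ : xstar ∈ Ω)
    (hmin : ∀ x ∈ Ω, F xstar ≤ F x)
    (hfoc : ∀ x ∈ Ω, 0 ≤ ⟪gradient F xstar, x - xstar⟫_ℝ) :
    ∀ x ∈ Ω, ∀ x₀ ∈ Ω,
      (1 / (n : ℝ)) *
          ∑ i, ‖gradient (f i) x - gradient (f i) x₀ + gradient F x₀ - gradient F x‖ ^ 2 ≤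
        6 * L * (2 * (F x - F xstar) + (F x₀ - F xstar)) :=
  variance_reduced_gradient_bound_general f L hconv hdiff hlip F hF Ω xstar hfoc
end

section
/- Let f : ℝ^n → ℝ be convex, differentiable, and L-smooth, let Ω ⊆ ℝ^n be a nonempty compact convex set of diameter at most D, let x* ∈ Ω minimize f over Ω, and fix δ > 0. Let w₀ ∈ Ω and for s = 1, …, k define γ_s = 2/(s+1), let g_s ∈ ℝ^n satisfy ‖g_s − ∇f(w_{s−1})‖ ≤ L D (1 + δ)/(s + 1), let v_s ∈ Ω satisfy ⟨g_s, v_s⟩ ≤ min_{u ∈ Ω} ⟨g_s, u⟩ + (L D²/2) γ_s δ, and set w_s = (1 − γ_s) w_{s−1} + γ_s v_s. Then f(w_k) − f(x*) ≤ 4 L D² (1 + δ)/(k + 2). -/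
/-!
Write `h_s = f(w_s) - f(x*)`. One step of the inexact Frank–Wolfe scheme is controlled by the
descent lemma for the `L`-smooth `f` along `v_s - w_{s-1}`, the first-order convexity inequality
at `x*`, and the two error budgets (gradient error times the diameter, oracle slack), giving
`h_s ≤ (1 - γ_s) h_{s-1} + γ_s² L D² (1 + δ)`. With `γ_s = 2/(s+1)` the first step wipes out
`h_0`, and induction on this recursion yields `h_k ≤ 4 L D² (1 + δ)/(k + 2)`.
-/

open scoped InnerProductSpace
open Set

section Gradient

variable {F : Type*} [NormedAddCommGroup F] [InnerProductSpace ℝ F] [CompleteSpace F]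
  {f : F → ℝ}

theorem DifferentiableAt.hasDerivAt_comp_add_smul {x d : F} {t : ℝ}
    (hf : DifferentiableAt ℝ f (x + t • d)) :
    HasDerivAt (fun t : ℝ => f (x + t • d)) ⟪gradient f (x + t • d), d⟫_ℝ t := by
  have hline : HasDerivAt (fun t : ℝ => x + t • d) d t := by
    simpa using ((hasDerivAt_id t).smul_const d).const_add x
  simpa [Function.comp_def] using
    hf.hasGradientAt.hasFDerivAt.comp_hasDerivAt t hline

theorem ConvexOn.inner_gradient_sub_le {s : Set F} (hconv : ConvexOn ℝ s f) {x y : F}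
    (hx : x ∈ s) (hy : y ∈ s) (hf : DifferentiableAt ℝ f x) :
    ⟪gradient f x, y - x⟫_ℝ ≤ f y - f x := by
  have hline : ConvexOn ℝ (AffineMap.lineMap x y ⁻¹' s) fun t : ℝ => f (x + t • (y - x)) := by
    have hcomp : f ∘ AffineMap.lineMap x y = fun t : ℝ => f (x + t • (y - x)) := by
      ext t
      simp [AffineMap.lineMap_apply_module', add_comm]
    simpa only [hcomp] using hconv.comp_affineMap (AffineMap.lineMap x y)
  have hderiv : HasDerivAt (fun t : ℝ => f (x + t • (y - x))) ⟪gradient f x, y - x⟫_ℝ 0 := by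
    have := (by rwa [zero_smul, add_zero] : DifferentiableAt ℝ f (x + (0 : ℝ) • (y - x)))
    simpa only [zero_smul, add_zero] using this.hasDerivAt_comp_add_smul
  have := hline.le_slope_of_hasDerivAt (by simpa using hx) (by simpa using hy) one_pos hderiv
  simpa only [slope_def_field, zero_smul, one_smul, add_zero, sub_zero, div_one,
    add_sub_cancel] using this

theorem le_add_inner_gradient_add_of_lipschitz_gradient {L : ℝ} (hf : Differentiable ℝ f)
    (hsmooth : ∀ x y, ‖gradient f x - gradient f y‖ ≤ L * ‖x - y‖) (x y : F) :
    f y ≤ f x + ⟪gradient f x, y - x⟫_ℝ + L / 2 * ‖y - x‖ ^ 2 := by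
  set d := y - x
  set φ : ℝ → ℝ := fun t => f (x + t • d) - t * ⟪gradient f x, d⟫_ℝ - L / 2 * t ^ 2 * ‖d‖ ^ 2
  have hφ : ∀ t, HasDerivAt φ
      (⟪gradient f (x + t • d), d⟫_ℝ - ⟪gradient f x, d⟫_ℝ - L * t * ‖d‖ ^ 2) t := fun t =>
    ((((hf (x + t • d)).hasDerivAt_comp_add_smul).sub ((hasDerivAt_id t).mul_const _)).sub
      (((hasDerivAt_pow 2 t).const_mul (L / 2)).mul_const (‖d‖ ^ 2))).congr_deriv
        (by simp only [one_mul, Nat.cast_ofNat]; ring)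
  have hanti : AntitoneOn φ (Ici 0) := by
    refine antitoneOn_of_hasDerivWithinAt_nonpos (convex_Ici 0)
      (HasDerivAt.continuousOn fun t _ => hφ t) (fun t _ => (hφ t).hasDerivWithinAt) ?_
    intro t ht
    rw [interior_Ici] at ht
    have := calc ⟪gradient f (x + t • d), d⟫_ℝ - ⟪gradient f x, d⟫_ℝ
        = ⟪gradient f (x + t • d) - gradient f x, d⟫_ℝ := (inner_sub_left _ _ _).symm
      _ ≤ ‖gradient f (x + t • d) - gradient f x‖ * ‖d‖ := real_inner_le_norm _ _
      _ ≤ L * ‖x + t • d - x‖ * ‖d‖ := by gcongr; exact hsmooth _ _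
      _ = L * t * ‖d‖ ^ 2 := by
        rw [add_sub_cancel_left, norm_smul, Real.norm_of_nonneg ht.le]; ring
    linarith
  have := hanti self_mem_Ici (zero_le_one' ℝ) zero_le_one
  simp only [φ, d, zero_smul, one_smul, add_zero, zero_mul, one_mul, sub_zero,
    add_sub_cancel] at this
  linarith

theorem mul_sq_norm_sub_le_of_lipschitz_gradient {L D : ℝ}
    (hsmooth : ∀ x y, ‖gradient f x - gradient f y‖ ≤ L * ‖x - y‖) {x y : F}
    (hxy : ‖x - y‖ ≤ D) (hLD : 0 ≤ L * D ^ 2) : L * ‖x - y‖ ^ 2 ≤ L * D ^ 2 := by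
  rcases eq_or_ne x y with rfl | hne
  · simpa using hLD
  have hL : 0 ≤ L := by
    have hpos : 0 < ‖x - y‖ := norm_pos_iff.mpr (sub_ne_zero.mpr hne)
    nlinarith [hsmooth x y, norm_nonneg (gradient f x - gradient f y)]
  gcongr

theorem frankWolfe_step_sub_le {L D ε η γ : ℝ} (hconv : ConvexOn ℝ univ f)
    (hf : Differentiable ℝ f) (hsmooth : ∀ x y, ‖gradient f x - gradient f y‖ ≤ L * ‖x - y‖)
    {x v g z : F} (hγ : 0 ≤ γ) (hg : ‖g - gradient f x‖ ≤ ε) (hv : ⟪g, v⟫_ℝ ≤ ⟪g, z⟫_ℝ + η)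
    (hvx : ‖v - x‖ ≤ D) (hvz : ‖v - z‖ ≤ D) (hLD : 0 ≤ L * D ^ 2) :
    f ((1 - γ) • x + γ • v) - f z ≤
      (1 - γ) * (f x - f z) + γ * (η + ε * D) + L / 2 * γ ^ 2 * D ^ 2 := by
  have herr : ⟪gradient f x - g, v - z⟫_ℝ ≤ ε * D :=
    (real_inner_le_norm _ _).trans <|
      mul_le_mul (norm_sub_rev g _ ▸ hg) hvz (norm_nonneg _) ((norm_nonneg _).trans hg)
  have hfirst : ⟪gradient f x, z - x⟫_ℝ ≤ f z - f x :=
    hconv.inner_gradient_sub_le trivial trivial (hf x)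
  have hdir : ⟪gradient f x, v - x⟫_ℝ ≤ η + ε * D + (f z - f x) := by
    have : ⟪gradient f x, v - x⟫_ℝ =
        (⟪g, v⟫_ℝ - ⟪g, z⟫_ℝ) + ⟪gradient f x - g, v - z⟫_ℝ + ⟪gradient f x, z - x⟫_ℝ := by
      simp only [inner_sub_left, inner_sub_right]; ring
    linarith
  have hdesc :=
    le_add_inner_gradient_add_of_lipschitz_gradient hf hsmooth x ((1 - γ) • x + γ • v)
  rw [show (1 - γ) • x + γ • v - x = γ • (v - x) by module, real_inner_smul_right, norm_smul,
    Real.norm_of_nonneg hγ, mul_pow] at hdesc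
  have hcurv := mul_le_mul_of_nonneg_left
    (mul_sq_norm_sub_le_of_lipschitz_gradient hsmooth hvx hLD) (sq_nonneg γ)
  linarith [mul_le_mul_of_nonneg_left hdir hγ]

end Gradient

theorem le_four_mul_div_of_frankWolfe_recursion {h : ℕ → ℝ} {C : ℝ} (hC : 0 ≤ C) {k : ℕ}
    (hk : 1 ≤ k) (hrec : ∀ s : ℕ, 1 ≤ s → s ≤ k →
      h s ≤ (1 - 2 / ((s : ℝ) + 1)) * h (s - 1) + (2 / ((s : ℝ) + 1)) ^ 2 * C) :
    h k ≤ 4 * C / ((k : ℝ) + 2) := by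
  induction k, hk using Nat.le_induction with
  | base =>
    have := hrec 1 le_rfl le_rfl
    norm_num at this ⊢
    linarith
  | succ m hm ih =>
    have ih := ih fun s hs hsm => hrec s hs (hsm.trans m.le_succ)
    have hlast := hrec (m + 1) (by omega) le_rfl
    rw [Nat.add_sub_cancel] at hlast
    push_cast at hlast ⊢
    have hm : (1 : ℝ) ≤ m := by exact_mod_cast hm
    have hγ : 2 / ((m : ℝ) + 1 + 1) ≤ 1 := by rw [div_le_one (by positivity)]; linarith
    calc h (m + 1)
        ≤ (1 - 2 / ((m : ℝ) + 1 + 1)) * h m + (2 / ((m : ℝ) + 1 + 1)) ^ 2 * C := hlast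
      _ ≤ (1 - 2 / ((m : ℝ) + 1 + 1)) * (4 * C / ((m : ℝ) + 2))
            + (2 / ((m : ℝ) + 1 + 1)) ^ 2 * C := by gcongr
      _ = 4 * C * (m + 1) / ((m : ℝ) + 2) ^ 2 := by field_simp; ring
      _ ≤ 4 * C / ((m : ℝ) + 1 + 2) := by
        rw [div_le_div_iff₀ (by positivity) (by positivity)]
        nlinarith

theorem Convex.iterates_mem {E : Type*} [AddCommGroup E] [Module ℝ E] {Ω : Set E}
    (hΩ : Convex ℝ Ω) {γ : ℕ → ℝ} {w v : ℕ → E} {k : ℕ}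
    (hγ : ∀ s : ℕ, 1 ≤ s → s ≤ k → γ s ∈ Icc 0 1) (hw0 : w 0 ∈ Ω)
    (hv : ∀ s : ℕ, 1 ≤ s → s ≤ k → v s ∈ Ω)
    (hw : ∀ s : ℕ, 1 ≤ s → s ≤ k → w s = (1 - γ s) • w (s - 1) + γ s • v s) :
    ∀ s ≤ k, w s ∈ Ω := by
  intro s
  induction s with
  | zero => exact fun _ => hw0
  | succ m ih =>
    intro hmk
    obtain ⟨hγ0, hγ1⟩ := hγ (m + 1) m.succ_pos hmk
    rw [hw (m + 1) m.succ_pos hmk, Nat.add_sub_cancel]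
    exact hΩ (ih (by omega)) (hv (m + 1) m.succ_pos hmk) (by linarith) hγ0 (by ring)

theorem svrf_key_lemma_general {n : ℕ}
    (f : EuclideanSpace ℝ (Fin n) → ℝ) (L : ℝ)
    (hconv : ConvexOn ℝ Set.univ f) (hdiff : Differentiable ℝ f)
    (hsmooth : ∀ x y, ‖gradient f x - gradient f y‖ ≤ L * ‖x - y‖)
    (Ω : Set (EuclideanSpace ℝ (Fin n)))
    (hΩconv : Convex ℝ Ω)
    (D : ℝ) (hD : ∀ x ∈ Ω, ∀ y ∈ Ω, ‖x - y‖ ≤ D)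
    (xstar : EuclideanSpace ℝ (Fin n)) (hxstarΩ : xstar ∈ Ω)
    (δ : ℝ) (hδ : 0 < δ)
    (k : ℕ) (hk : 1 ≤ k)
    (w g v : ℕ → EuclideanSpace ℝ (Fin n))
    (hw0 : w 0 ∈ Ω)
    (hg : ∀ s : ℕ, 1 ≤ s → s ≤ k →
      ‖g s - gradient f (w (s - 1))‖ ≤ L * D * (1 + δ) / ((s : ℝ) + 1))
    (hvΩ : ∀ s : ℕ, 1 ≤ s → s ≤ k → v s ∈ Ω)
    (hvapprox : ∀ s : ℕ, 1 ≤ s → s ≤ k → ∀ u ∈ Ω,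
      ⟪g s, v s⟫_ℝ ≤ ⟪g s, u⟫_ℝ + (L * D ^ 2 / 2) * (2 / ((s : ℝ) + 1)) * δ)
    (hupdate : ∀ s : ℕ, 1 ≤ s → s ≤ k →
      w s = (1 - 2 / ((s : ℝ) + 1)) • w (s - 1) + (2 / ((s : ℝ) + 1)) • v s) :
    f (w k) - f xstar ≤ 4 * L * D ^ 2 * (1 + δ) / ((k : ℝ) + 2) := by
  have hLD : 0 ≤ L * D ^ 2 := by
    have := hvapprox 1 le_rfl hk (v 1) (hvΩ 1 le_rfl hk)
    norm_num at this
    nlinarith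
  have hγ : ∀ s : ℕ, 1 ≤ s → s ≤ k → 2 / ((s : ℝ) + 1) ∈ Icc 0 1 := fun s hs _ =>
    ⟨by positivity, by rw [div_le_one (by positivity)]; exact_mod_cast Nat.succ_le_succ hs⟩
  have hwΩ := hΩconv.iterates_mem (γ := fun s : ℕ => 2 / ((s : ℝ) + 1)) hγ hw0 hvΩ hupdate
  have hstep : ∀ s : ℕ, 1 ≤ s → s ≤ k → f (w s) - f xstar ≤
      (1 - 2 / ((s : ℝ) + 1)) * (f (w (s - 1)) - f xstar)
        + (2 / ((s : ℝ) + 1)) ^ 2 * (L * D ^ 2 * (1 + δ)) := by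
    intro s hs hsk
    have hvs := hvΩ s hs hsk
    rw [hupdate s hs hsk]
    refine (frankWolfe_step_sub_le hconv hdiff hsmooth (hγ s hs hsk).1 (hg s hs hsk)
      (hvapprox s hs hsk xstar hxstarΩ) (hD _ hvs _ (hwΩ (s - 1) (by omega)))
      (hD _ hvs _ hxstarΩ) hLD).trans_eq ?_
    field_simp
    ring
  calc f (w k) - f xstar ≤ 4 * (L * D ^ 2 * (1 + δ)) / ((k : ℝ) + 2) :=
        le_four_mul_div_of_frankWolfe_recursion (mul_nonneg hLD (by linarith)) hk hstep
    _ = 4 * L * D ^ 2 * (1 + δ) / ((k : ℝ) + 2) := by ring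

/-- Pathwise form of the key lemma (Lemma 2) in the convergence analysis of SVRF
with approximate oracle: if the inexact gradients `g_s` are accurate to within
`L D (1+δ)/(s+1)`, the iterates with steps `γ_s = 2/(s+1)` satisfy
`f(w_k) − f(x*) ≤ 4 L D² (1+δ)/(k+2)`. -/
theorem svrf_key_lemma {n : ℕ}
    (f : EuclideanSpace ℝ (Fin n) → ℝ) (L : ℝ)
    (hconv : ConvexOn ℝ Set.univ f) (hdiff : Differentiable ℝ f)
    (hsmooth : ∀ x y, ‖gradient f x - gradient f y‖ ≤ L * ‖x - y‖)
    (Ω : Set (EuclideanSpace ℝ (Fin n))) (hne : Ω.Nonempty)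
    (hcomp : IsCompact Ω) (hΩconv : Convex ℝ Ω)
    (D : ℝ) (hD : ∀ x ∈ Ω, ∀ y ∈ Ω, ‖x - y‖ ≤ D)
    (xstar : EuclideanSpace ℝ (Fin n)) (hxstarΩ : xstar ∈ Ω)
    (hmin : ∀ y ∈ Ω, f xstar ≤ f y)
    (δ : ℝ) (hδ : 0 < δ)
    (k : ℕ) (hk : 1 ≤ k)
    (w g v : ℕ → EuclideanSpace ℝ (Fin n))
    (hw0 : w 0 ∈ Ω)
    (hg : ∀ s : ℕ, 1 ≤ s → s ≤ k →
      ‖g s - gradient f (w (s - 1))‖ ≤ L * D * (1 + δ) / ((s : ℝ) + 1))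
    (hvΩ : ∀ s : ℕ, 1 ≤ s → s ≤ k → v s ∈ Ω)
    (hvapprox : ∀ s : ℕ, 1 ≤ s → s ≤ k → ∀ u ∈ Ω,
      ⟪g s, v s⟫_ℝ ≤ ⟪g s, u⟫_ℝ + (L * D ^ 2 / 2) * (2 / ((s : ℝ) + 1)) * δ)
    (hupdate : ∀ s : ℕ, 1 ≤ s → s ≤ k →
      w s = (1 - 2 / ((s : ℝ) + 1)) • w (s - 1) + (2 / ((s : ℝ) + 1)) • v s) :
    f (w k) - f xstar ≤ 4 * L * D ^ 2 * (1 + δ) / ((k : ℝ) + 2) :=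
  svrf_key_lemma_general f L hconv hdiff hsmooth Ω hΩconv D hD xstar hxstarΩ δ hδ k hk w g v hw0 hg
    hvΩ hvapprox hupdate
end
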